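/- arXiv:1709.03780 — 4 statements merged into one kernel-verified Lean document; each statement's English description precedes it below -/
import Mathlib

section
/- For a pure qubit state (Bloch vector r with |r| = 1) and observables with Bloch vectors a₁,…,a_M, the sum of variances Σᵢ (|aᵢ|² − (aᵢ·r)²) lies between σ₂ + σ₃ and σ₁ + σ₂, where σ₁ ≥ σ₂ ≥ σ₃ are the eigenvalues of 𝒜 = Σᵢ aᵢaᵢᵀ. -/
open Matrix

private lemma vecMulVec_mulVec' (v w r : Fin 3 → ℝ) :
    vecMulVec v w *ᵥ r = (w ⬝ᵥ r) • v := by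
  funext i
  simp [vecMulVec, mulVec, dotProduct, Finset.mul_sum, Finset.sum_mul]
  exact Finset.sum_congr rfl fun j _ => by ring

private lemma trace_vecMulVec' (v w : Fin 3 → ℝ) :
    (vecMulVec v w).trace = v ⬝ᵥ w := by
  simp [trace, vecMulVec, Matrix.diag, dotProduct]

private lemma dotProduct_sum' {M : ℕ} (r : Fin 3 → ℝ) (f : Fin M → (Fin 3 → ℝ)) :
    r ⬝ᵥ (∑ i, f i) = ∑ i, r ⬝ᵥ f i := by
  simp [dotProduct, Finset.mul_sum]
  exact Finset.sum_comm

/-- For a pure qubit state (|r| = 1) the sum of variances lies between σ₂ + σ₃ and σ₁ + σ₂. -/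
theorem stmt2 (M : ℕ) (a : Fin M → (Fin 3 → ℝ)) (r : Fin 3 → ℝ) (hr : r ⬝ᵥ r = 1)
    (A : Matrix (Fin 3) (Fin 3) ℝ) (hAdef : A = ∑ i, vecMulVec (a i) (a i))
    (hA : A.IsHermitian)
    (σ₁ σ₂ σ₃ : ℝ) (hord : σ₂ ≤ σ₁ ∧ σ₃ ≤ σ₂)
    (hperm : ∃ e : Equiv.Perm (Fin 3), ∀ i, ![σ₁, σ₂, σ₃] i = hA.eigenvalues (e i)) :
    σ₂ + σ₃ ≤ ∑ i, (a i ⬝ᵥ a i - (a i ⬝ᵥ r) ^ 2) ∧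
    ∑ i, (a i ⬝ᵥ a i - (a i ⬝ᵥ r) ^ 2) ≤ σ₁ + σ₂ := by
  obtain ⟨e, he⟩ := hperm
  obtain ⟨h12, h23⟩ := hord
  set μ := hA.eigenvalues with hμ
  -- eigenvalue bounds
  have hvec : ∀ i : Fin 3, σ₃ ≤ ![σ₁, σ₂, σ₃] i ∧ ![σ₁, σ₂, σ₃] i ≤ σ₁ := by
    intro i
    fin_cases i <;> constructor <;> simp <;> linarith
  have hbound : ∀ j, σ₃ ≤ μ j ∧ μ j ≤ σ₁ := by
    intro j
    have h := he (e.symm j)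
    rw [Equiv.apply_symm_apply] at h
    rw [← h]
    exact hvec _
  -- trace
  have htrace : A.trace = σ₁ + σ₂ + σ₃ := by
    have h1 : A.trace = ∑ j, μ j := by
      nth_rw 1 [hA.spectral_theorem]
      rw [Unitary.conjStarAlgAut_apply, Matrix.trace_mul_cycle, (Matrix.mem_unitaryGroup_iff').mp (hA.eigenvectorUnitary).2,
        one_mul, trace_diagonal]
      simp [hμ]
    rw [h1, ← Equiv.sum_comp e, Fin.sum_univ_three, ← he 0, ← he 1, ← he 2]
    simp
  have hsum : ∑ i, (a i ⬝ᵥ r) ^ 2 = r ⬝ᵥ (A *ᵥ r) := by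
    rw [hAdef]
    rw [show (∑ i, vecMulVec (a i) (a i)) *ᵥ r = ∑ i, vecMulVec (a i) (a i) *ᵥ r from
      map_sum (mulVec.addMonoidHomLeft r) _ _]
    rw [dotProduct_sum']
    refine Finset.sum_congr rfl fun i _ => ?_
    rw [vecMulVec_mulVec', dotProduct_smul, dotProduct_comm, smul_eq_mul]
    ring
  have htr2 : ∑ i, a i ⬝ᵥ a i = A.trace := by
    rw [hAdef, trace_sum]
    exact Finset.sum_congr rfl fun i _ => (trace_vecMulVec' _ _).symm
  -- quadratic form via spectral theorem
  set U : Matrix (Fin 3) (Fin 3) ℝ := (hA.eigenvectorUnitary : Matrix (Fin 3) (Fin 3) ℝ)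
    with hU
  have hspec : A = U * diagonal μ * star U := by
    have := hA.spectral_theorem
    simpa using this
  set y : Fin 3 → ℝ := r ᵥ* U with hy
  have hyv : star U *ᵥ r = y := by
    rw [hy]
    have : star U = Uᵀ := by
      ext i j
      simp [star, conjTranspose]
    rw [this, mulVec_transpose]
  have hnorm : ∑ j, y j ^ 2 = 1 := by
    have h1 : y ⬝ᵥ y = r ⬝ᵥ ((U * star U) *ᵥ r) := by
      nth_rw 1 [hy]
      rw [← hyv, ← mulVec_mulVec, ← dotProduct_mulVec]
    rw [(Matrix.mem_unitaryGroup_iff).mp (hA.eigenvectorUnitary).2] at h1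
    rw [one_mulVec, hr] at h1
    rw [← h1]
    exact Finset.sum_congr rfl fun j _ => by ring
  have hquad : r ⬝ᵥ (A *ᵥ r) = ∑ j, μ j * y j ^ 2 := by
    rw [hspec, ← mulVec_mulVec, ← mulVec_mulVec, hyv, dotProduct_mulVec, hy]
    simp only [dotProduct, mulVec_diagonal]
    exact Finset.sum_congr rfl fun j _ => by ring
  have hq_le : r ⬝ᵥ (A *ᵥ r) ≤ σ₁ := by
    rw [hquad, show σ₁ = ∑ j, σ₁ * y j ^ 2 by rw [← Finset.mul_sum, hnorm, mul_one]]
    exact Finset.sum_le_sum fun j _ => mul_le_mul_of_nonneg_right (hbound j).2 (sq_nonneg _)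
  have hq_ge : σ₃ ≤ r ⬝ᵥ (A *ᵥ r) := by
    rw [hquad, show σ₃ = ∑ j, σ₃ * y j ^ 2 by rw [← Finset.mul_sum, hnorm, mul_one]]
    exact Finset.sum_le_sum fun j _ => mul_le_mul_of_nonneg_right (hbound j).1 (sq_nonneg _)
  have hS : ∑ i, (a i ⬝ᵥ a i - (a i ⬝ᵥ r) ^ 2) = (σ₁ + σ₂ + σ₃) - r ⬝ᵥ (A *ᵥ r) := by
    rw [Finset.sum_sub_distrib, htr2, htrace, hsum]
  rw [hS]
  constructor <;> linarith
end

section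
/- Let {A_i}_{i=1}^{N²−1} be a complete orthogonal set of traceless Hermitian observables on ℂᴺ with Tr[A_iA_j] = 2|a|²δ_{ij}. Then for any density matrix ρ with Bloch vector r, Σᵢ ΔA_i² = |a|²(2(N²−1)/N − |r|²), and consequently Σᵢ ΔA_i² ≥ 2|a|²(N−1). -/
open Matrix ComplexOrder

section Aux

lemma complete11 (N : ℕ) (hN : 0 < N)
    (lam : Fin (N ^ 2 - 1) → Matrix (Fin N) (Fin N) ℂ)
    (htrless : ∀ μ, trace (lam μ) = 0)
    (horth : ∀ μ ν, trace (lam μ * lam ν) = if μ = ν then 2 else 0)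
    (X : Matrix (Fin N) (Fin N) ℂ) :
    X = (trace X / N) • 1 + (1 / 2 : ℂ) • ∑ μ, trace (lam μ * X) • lam μ := by
  have hNC : (N : ℂ) ≠ 0 := Nat.cast_ne_zero.mpr hN.ne'
  set b : Option (Fin (N ^ 2 - 1)) → Matrix (Fin N) (Fin N) ℂ :=
    fun o => o.elim 1 lam with hb
  have htr1 : trace (1 : Matrix (Fin N) (Fin N) ℂ) = N := by simp
  have hli : LinearIndependent ℂ b := by
    rw [Fintype.linearIndependent_iff]
    intro g hg
    have hsome : ∀ ν, g (some ν) = 0 := by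
      intro ν
      have h2 : (2 : ℂ) * g (some ν) = 0 := by
        have h3 := congrArg (fun M => trace (lam ν * M)) hg
        simpa [Matrix.mul_sum, Matrix.mul_add, Matrix.mul_smul, hb, Fintype.sum_option,
          Matrix.trace_add, Matrix.trace_sum, Matrix.trace_smul, smul_eq_mul, mul_one,
          htrless, horth, mul_comm, mul_ite, Finset.sum_ite_eq, Finset.sum_ite_eq'] using h3
      exact (mul_eq_zero.mp h2).resolve_left two_ne_zero
    intro a
    match a with
    | some ν => exact hsome ν
    | none =>
      rw [Fintype.sum_option] at hg
      simp only [hsome, zero_smul, Finset.sum_const_zero, add_zero, hb, Option.elim] at hg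
      have := congrArg trace hg
      rw [trace_smul, htr1, trace_zero, smul_eq_mul] at this
      exact (mul_eq_zero.mp this).resolve_right hNC
  have hcard : Fintype.card (Option (Fin (N ^ 2 - 1)))
      = Module.finrank ℂ (Matrix (Fin N) (Fin N) ℂ) := by
    rw [Fintype.card_option, Fintype.card_fin, Module.finrank_matrix]
    simp only [Fintype.card_fin, Module.finrank_self, mul_one]
    have h1 : 1 ≤ N ^ 2 := Nat.one_le_pow _ _ hN
    have h2 : N ^ 2 = N * N := sq N
    omega
  obtain ⟨B, hBcoe⟩ : ∃ B : Module.Basis (Option (Fin (N ^ 2 - 1))) ℂ (Matrix (Fin N) (Fin N) ℂ),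
      ⇑B = b := ⟨_, coe_basisOfLinearIndependentOfCardEqFinrank hli hcard⟩
  have hrepr : ∑ a, B.repr X a • b a = X := by
    conv_rhs => rw [← B.sum_repr X]
    rw [hBcoe]
  set d := B.repr X with hd
  rw [Fintype.sum_option] at hrepr
  simp only [hb, Option.elim] at hrepr
  have htrX : trace X = d none * N := by
    rw [← hrepr]
    simp [trace_smul, htrless, htr1]
  have htrlam : ∀ ν, trace (lam ν * X) = 2 * d (some ν) := by
    intro ν
    rw [← hrepr]
    simp only [Matrix.mul_add, Matrix.mul_sum, Matrix.mul_smul, trace_add, trace_sum,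
      trace_smul, mul_one, htrless, horth, smul_eq_mul]
    simp [mul_ite, mul_comm]
  rw [htrX]
  conv_lhs => rw [← hrepr]
  have h12 : ∀ μ, trace (lam μ * X) • lam μ = (2 * d (some μ)) • lam μ := fun μ => by
    rw [htrlam]
  simp only [h12, smul_smul]
  rw [mul_div_assoc, div_self hNC, mul_one, Finset.smul_sum]
  congr 1
  refine Finset.sum_congr rfl fun x _ => ?_
  rw [smul_smul]
  congr 1
  ring

lemma key11 (N : ℕ) (hN : 0 < N)
    (lam : Fin (N ^ 2 - 1) → Matrix (Fin N) (Fin N) ℂ)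
    (htrless : ∀ μ, trace (lam μ) = 0)
    (horth : ∀ μ ν, trace (lam μ * lam ν) = if μ = ν then 2 else 0)
    (a b c d : Fin N) :
    ∑ μ, lam μ a b * lam μ c d
      = 2 * ((if a = d then (1:ℂ) else 0) * (if b = c then 1 else 0))
        - 2 / N * ((if a = b then (1:ℂ) else 0) * (if c = d then 1 else 0)) := by
  have h := complete11 N hN lam htrless horth (Matrix.single b a 1)
  have htrE : trace (Matrix.single b a (1:ℂ)) = if a = b then (1:ℂ) else 0 := by
    have hdiag : ∀ p : Fin N, Matrix.single b a (1:ℂ) p p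
        = if b = p then (if a = p then (1:ℂ) else 0) else 0 := by
      intro p; simp [Matrix.single, Matrix.of_apply, ite_and]
    rw [Matrix.trace]
    simp only [Matrix.diag, hdiag, Finset.sum_ite_eq, Finset.mem_univ, if_true]
  have htrlamE : ∀ μ, trace (lam μ * Matrix.single b a (1:ℂ)) = lam μ a b := by
    intro μ
    simp [Matrix.trace, Matrix.diag, Matrix.mul_apply, Matrix.single,
      Matrix.of_apply, ite_and]
  have hE : Matrix.single b a (1:ℂ) c d
      = (if a = d then (1:ℂ) else 0) * (if b = c then 1 else 0) := by
    by_cases h1 : a = d <;> by_cases h2 : b = c <;>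
      simp [Matrix.single, Matrix.of_apply, h1, h2]
  have h2 : Matrix.single b a (1:ℂ) c d
      = (trace (Matrix.single b a (1:ℂ)) / N) * (if c = d then (1:ℂ) else 0)
        + (1/2) * ∑ μ, lam μ a b * lam μ c d := by
    conv_lhs => rw [h]
    simp [Matrix.add_apply, Matrix.smul_apply, Matrix.sum_apply, Matrix.one_apply,
      htrlamE, smul_eq_mul, Finset.mul_sum]
  rw [htrE, hE] at h2
  linear_combination -2 * h2

lemma casimir11 (N : ℕ) (hN : 0 < N)
    (lam : Fin (N ^ 2 - 1) → Matrix (Fin N) (Fin N) ℂ)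
    (key : ∀ a b c d : Fin N, ∑ μ, lam μ a b * lam μ c d
      = 2 * ((if a = d then (1:ℂ) else 0) * (if b = c then 1 else 0))
        - 2 / N * ((if a = b then (1:ℂ) else 0) * (if c = d then 1 else 0))) :
    ∑ μ, lam μ * lam μ = (2 * ((N:ℂ)^2 - 1) / N) • 1 := by
  have hNC : (N : ℂ) ≠ 0 := Nat.cast_ne_zero.mpr hN.ne'
  ext p q
  rw [Matrix.sum_apply]
  simp_rw [Matrix.mul_apply]
  rw [Finset.sum_comm]
  simp_rw [key p _ _ q]
  rw [Finset.sum_sub_distrib]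
  simp only [if_pos rfl, mul_one, Finset.sum_const, Finset.card_univ, Fintype.card_fin,
    nsmul_eq_mul]
  have hsum : ∑ r : Fin N, (2 / (N:ℂ)) * ((if p = r then (1:ℂ) else 0) * (if r = q then 1 else 0))
      = (2 / N) * (if p = q then (1:ℂ) else 0) := by
    rw [← Finset.mul_sum]
    congr 1
    simp [ite_and, mul_ite, Finset.sum_ite_eq']
  rw [hsum]
  rw [Matrix.smul_apply, Matrix.one_apply, smul_eq_mul]
  by_cases hpq : p = q
  · simp only [hpq, if_pos rfl, mul_one, if_true]
    field_simp
  · simp [hpq]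

lemma purity11 (N : ℕ) (ρ : Matrix (Fin N) (Fin N) ℂ) (hρ : ρ.PosSemidef)
    (htr : trace ρ = 1) : (trace (ρ * ρ)).re ≤ 1 := by
  have hH := hρ.1
  set U : Matrix (Fin N) (Fin N) ℂ := (hH.eigenvectorUnitary : Matrix (Fin N) (Fin N) ℂ) with hU
  set D : Matrix (Fin N) (Fin N) ℂ := diagonal (RCLike.ofReal ∘ hH.eigenvalues) with hD
  have hUU : star U * U = 1 := (Matrix.mem_unitaryGroup_iff').mp hH.eigenvectorUnitary.2
  have hst : ρ = U * D * star U := hH.spectral_theorem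
  have htrD : trace D = ∑ i, (hH.eigenvalues i : ℂ) := by
    simp [hD, trace_diagonal]
  have htrρ : trace ρ = trace D := by
    rw [hst, trace_mul_comm, ← mul_assoc, hUU, one_mul]
  have hsq : ρ * ρ = U * (D * D) * star U := by
    rw [hst]
    rw [show U * D * star U * (U * D * star U) = U * D * (star U * U) * D * star U by
      noncomm_ring]
    rw [hUU]
    noncomm_ring
  have htrρ2 : trace (ρ * ρ) = ∑ i, (hH.eigenvalues i : ℂ) ^ 2 := by
    rw [hsq, trace_mul_comm, ← mul_assoc, hUU, one_mul, hD]
    simp [diagonal_mul_diagonal, trace_diagonal, sq]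
  have hsum1 : ∑ i, hH.eigenvalues i = 1 := by
    have : ((∑ i, hH.eigenvalues i : ℝ) : ℂ) = 1 := by
      push_cast
      rw [← htrD, ← htrρ, htr]
    exact_mod_cast this
  have hre : (trace (ρ * ρ)).re = ∑ i, hH.eigenvalues i ^ 2 := by
    rw [htrρ2]
    exact_mod_cast rfl
  rw [hre]
  calc ∑ i, hH.eigenvalues i ^ 2 ≤ (∑ i, hH.eigenvalues i) ^ 2 :=
        Finset.sum_sq_le_sq_sum_of_nonneg (fun i _ => hρ.eigenvalues_nonneg i)
    _ = 1 := by rw [hsum1]; norm_num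

end Aux

/-- For a complete orthogonal set of traceless observables Aᵢ = |a| Σⱼ Oᵢⱼ λⱼ,
Σᵢ ΔAᵢ² = |a|²(2(N²−1)/N − |r|²) ≥ 2|a|²(N−1). -/
theorem stmt11 (N : ℕ) (hN : 0 < N)
    (lam : Fin (N ^ 2 - 1) → Matrix (Fin N) (Fin N) ℂ)
    (hherm : ∀ μ, (lam μ).IsHermitian) (htrless : ∀ μ, trace (lam μ) = 0)
    (horth : ∀ μ ν, trace (lam μ * lam ν) = if μ = ν then 2 else 0)
    (c : ℝ) (hc : 0 < c)
    (O : Matrix (Fin (N ^ 2 - 1)) (Fin (N ^ 2 - 1)) ℝ)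
    (hO : O ∈ Matrix.orthogonalGroup (Fin (N ^ 2 - 1)) ℝ)
    (A : Fin (N ^ 2 - 1) → Matrix (Fin N) (Fin N) ℂ)
    (hA : ∀ i, A i = ∑ j, ((c * O i j : ℝ) : ℂ) • lam j)
    (ρ : Matrix (Fin N) (Fin N) ℂ) (hρ : ρ.PosSemidef) (htr : trace ρ = 1)
    (r : Fin (N ^ 2 - 1) → ℝ)
    (hdecomp : ρ = (N : ℂ)⁻¹ • 1 + (1 / 2 : ℂ) • ∑ μ, (r μ : ℂ) • lam μ) :
    ∑ i, ((trace (A i ^ 2 * ρ)).re - ((trace (A i * ρ)).re) ^ 2)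
      = c ^ 2 * (2 * (N ^ 2 - 1) / N - r ⬝ᵥ r) ∧
    2 * c ^ 2 * (N - 1) ≤ ∑ i, ((trace (A i ^ 2 * ρ)).re - ((trace (A i * ρ)).re) ^ 2) := by
  have hNC : (N : ℂ) ≠ 0 := Nat.cast_ne_zero.mpr hN.ne'
  have hNR : (0:ℝ) < N := by exact_mod_cast hN
  have hNR1 : (1:ℝ) ≤ N := by exact_mod_cast hN
  have hcas := casimir11 N hN lam (key11 N hN lam htrless horth)
  -- orthogonality of O entrywise
  have hO' : star O * O = 1 := (Matrix.mem_orthogonalGroup_iff' (n := Fin (N^2-1)) (R := ℝ)).mp hO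
  have hOrtho : ∀ j k, ∑ i, O i j * O i k = if j = k then (1:ℝ) else 0 := by
    intro j k
    have h : (star O * O) j k = (1 : Matrix (Fin (N^2-1)) (Fin (N^2-1)) ℝ) j k := by rw [hO']
    simpa [Matrix.mul_apply, Matrix.star_apply, Matrix.one_apply] using h
  -- trace (lam μ * ρ) = r μ
  have hTrlamρ : ∀ μ, trace (lam μ * ρ) = (r μ : ℂ) := by
    intro μ
    rw [hdecomp, Matrix.mul_add, trace_add, Matrix.mul_smul, trace_smul, Matrix.mul_one,
      htrless, smul_zero, zero_add, Matrix.mul_smul, trace_smul, Matrix.mul_sum]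
    simp only [trace_sum, Matrix.mul_smul, trace_smul, smul_eq_mul, horth, mul_ite, mul_zero,
      Finset.sum_ite_eq, Finset.mem_univ, if_true]
    ring
  -- trace (A i * ρ)
  have hTrAρ : ∀ i, trace (A i * ρ) = ((c * ∑ j, O i j * r j : ℝ) : ℂ) := by
    intro i
    rw [hA i, Matrix.sum_mul, trace_sum]
    simp only [Matrix.smul_mul, trace_smul, hTrlamρ, smul_eq_mul]
    push_cast
    rw [Finset.mul_sum]
    exact Finset.sum_congr rfl fun j _ => by ring
  -- sum of squares of the first moments
  have hdot : ∑ i, (∑ j, O i j * r j)^2 = r ⬝ᵥ r := by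
    calc ∑ i, (∑ j, O i j * r j)^2
        = ∑ i, ∑ j, ∑ k, (O i j * r j) * (O i k * r k) := by
          simp_rw [sq, Finset.sum_mul_sum]
      _ = ∑ j, ∑ k, (∑ i, O i j * O i k) * (r j * r k) := by
          rw [Finset.sum_comm]
          refine Finset.sum_congr rfl fun j _ => ?_
          rw [Finset.sum_comm]
          refine Finset.sum_congr rfl fun k _ => ?_
          rw [Finset.sum_mul]
          exact Finset.sum_congr rfl fun i _ => by ring
      _ = r ⬝ᵥ r := by
          simp_rw [hOrtho, ite_mul, one_mul, zero_mul, Finset.sum_ite_eq, Finset.mem_univ,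
            if_true]
          simp [dotProduct, sq]
  -- sum of A i ^ 2
  have hsumA2 : ∑ i, A i ^ 2 = ((c:ℂ)^2) • ∑ j, lam j * lam j := by
    have expand : ∀ i, A i ^ 2
        = ∑ j, ∑ k, (((c * O i j) * (c * O i k) : ℝ) : ℂ) • (lam j * lam k) := by
      intro i
      rw [sq, hA i, Finset.sum_mul_sum]
      refine Finset.sum_congr rfl fun j _ => Finset.sum_congr rfl fun k _ => ?_
      rw [Matrix.smul_mul, Matrix.mul_smul, smul_smul]
      norm_cast
    simp_rw [expand]
    rw [Finset.sum_comm]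
    rw [Finset.smul_sum]
    refine Finset.sum_congr rfl fun j _ => ?_
    rw [Finset.sum_comm]
    have hcol : ∀ k, ∑ i, (((c * O i j) * (c * O i k) : ℝ) : ℂ) • (lam j * lam k)
        = ((c^2 * (if j = k then (1:ℝ) else 0) : ℝ) : ℂ) • (lam j * lam k) := by
      intro k
      rw [← Finset.sum_smul]
      congr 1
      push_cast
      rw [← hOrtho j k]
      push_cast
      rw [Finset.mul_sum]
      refine Finset.sum_congr rfl fun i _ => by ring
    simp_rw [hcol]
    rw [Fintype.sum_eq_single j]
    · simp [smul_smul]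
    · intro k hk
      simp [Ne.symm hk, (fun h => hk h.symm : ¬ j = k)]
  -- second moment sum
  have htrA2 : ∑ i, trace (A i ^ 2 * ρ) = ((c^2 * (2 * ((N:ℝ)^2 - 1) / N) : ℝ) : ℂ) := by
    calc ∑ i, trace (A i ^ 2 * ρ) = trace ((∑ i, A i ^ 2) * ρ) := by
          rw [Matrix.sum_mul, trace_sum]
      _ = ((c:ℂ)^2) * ((2 * ((N:ℂ)^2 - 1) / N) * trace ρ) := by
          rw [hsumA2, hcas, Matrix.smul_mul, Matrix.smul_mul, Matrix.one_mul, trace_smul,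
            trace_smul, smul_eq_mul, smul_eq_mul]
      _ = ((c^2 * (2 * ((N:ℝ)^2 - 1) / N) : ℝ) : ℂ) := by
          rw [htr, mul_one]
          push_cast
          ring
  -- purity computation
  have htrρρ : trace (ρ * ρ) = (((1:ℝ)/N + (r ⬝ᵥ r)/2 : ℝ) : ℂ) := by
    have htrS : trace (∑ μ, (r μ:ℂ) • lam μ) = 0 := by
      simp [trace_sum, trace_smul, htrless]
    have htrSS : trace ((∑ μ, (r μ:ℂ) • lam μ) * (∑ ν, (r ν:ℂ) • lam ν))
        = 2 * ∑ μ, (r μ:ℂ)^2 := by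
      rw [Finset.sum_mul_sum, trace_sum]
      simp only [trace_sum, Matrix.smul_mul, Matrix.mul_smul, trace_smul, smul_eq_mul,
        horth, mul_ite, mul_zero, Finset.sum_ite_eq, Finset.sum_ite_eq', Finset.mem_univ,
        if_true]
      rw [Finset.mul_sum]
      refine Finset.sum_congr rfl fun μ _ => by ring
    have hdotc : ((r ⬝ᵥ r : ℝ) : ℂ) = ∑ μ, (r μ:ℂ)^2 := by
      push_cast [dotProduct]
      exact Finset.sum_congr rfl fun μ _ => by ring
    rw [hdecomp]
    simp only [Matrix.add_mul, Matrix.mul_add, Matrix.smul_mul, Matrix.mul_smul,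
      Matrix.one_mul, Matrix.mul_one, trace_add, trace_smul, smul_eq_mul, trace_one,
      htrS, htrSS, Finset.card_univ, Fintype.card_fin, mul_zero, zero_add, add_zero]
    push_cast
    rw [hdotc]
    field_simp
  have hr2 : r ⬝ᵥ r ≤ 2 - 2/(N:ℝ) := by
    have hp := purity11 N ρ hρ htr
    rw [htrρρ] at hp
    rw [Complex.ofReal_re] at hp
    have : (1:ℝ)/N + (r ⬝ᵥ r)/2 ≤ 1 := hp
    have h2N : 2/(N:ℝ) = 2 * (1/(N:ℝ)) := by ring
    linarith
  -- assemble
  have hre2 : ∀ i, (trace (A i * ρ)).re = c * ∑ j, O i j * r j := by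
    intro i
    rw [hTrAρ i, Complex.ofReal_re]
  have hresum : ∑ i, (trace (A i ^ 2 * ρ)).re = c^2 * (2 * ((N:ℝ)^2 - 1) / N) := by
    have := congrArg Complex.re htrA2
    rw [Complex.ofReal_re] at this
    rw [← this, Complex.re_sum]
  have hmain : ∑ i, ((trace (A i ^ 2 * ρ)).re - ((trace (A i * ρ)).re) ^ 2)
      = c ^ 2 * (2 * ((N:ℝ) ^ 2 - 1) / N - r ⬝ᵥ r) := by
    rw [Finset.sum_sub_distrib, hresum]
    simp_rw [hre2, mul_pow]
    rw [← Finset.mul_sum, hdot]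
    ring
  refine ⟨hmain, ?_⟩
  rw [hmain]
  have h3 : c^2 * (2 * ((N:ℝ)^2 - 1)/N - r ⬝ᵥ r) - 2 * c^2 * ((N:ℝ) - 1)
      = c^2 * ((2 - 2/(N:ℝ)) - r ⬝ᵥ r) := by
    field_simp
    ring
  have h4 : 0 ≤ c^2 * ((2 - 2/(N:ℝ)) - r ⬝ᵥ r) :=
    mul_nonneg (sq_nonneg c) (by linarith)
  linarith
end

section
/- Let p_k ≥ 0 with Σ_k p_k = 1, and let r_k, s_k ∈ ℝⁿ with |r_k|² ≤ 2(N−1)/N and |s_k|² ≤ 2(N−1)/N for all k. Then for any orthonormal families {a_i}, {b_i} (i = 1,…,n) of ℝⁿ: (4(N²−1)/N) + 2Σ_{i,k} p_k (r_k·a_i)(s_k·b_i) − Σ_i (Σ_k p_k((r_k·a_i) + (s_k·b_i)))² ≥ 4(N−1). -/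
open Matrix

lemma bessel_eq {n : ℕ} (a : Fin n → Fin n → ℝ)
    (ha : ∀ i j, a i ⬝ᵥ a j = if i = j then 1 else 0) (v : Fin n → ℝ) :
    ∑ i, (v ⬝ᵥ a i) ^ 2 = v ⬝ᵥ v := by
  set A : Matrix (Fin n) (Fin n) ℝ := Matrix.of a with hAdef
  have hA : A * Aᵀ = 1 := by
    ext i j
    simpa [Matrix.mul_apply, Matrix.one_apply, dotProduct, A] using ha i j
  have hA' : Aᵀ * A = 1 := mul_eq_one_comm.mp hA
  have key : (A *ᵥ v) ⬝ᵥ (A *ᵥ v) = v ⬝ᵥ v := by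
    rw [Matrix.dotProduct_mulVec, ← Matrix.mulVec_transpose, Matrix.mulVec_mulVec, hA',
      Matrix.one_mulVec]
  calc ∑ i, (v ⬝ᵥ a i) ^ 2 = (A *ᵥ v) ⬝ᵥ (A *ᵥ v) := by
        simp [dotProduct, Matrix.mulVec, sq, mul_comm, A, Finset.sum_mul, Finset.mul_sum]
    _ = v ⬝ᵥ v := key

lemma jensen_sq {K : ℕ} (p : Fin K → ℝ) (hp : ∀ k, 0 ≤ p k) (hp1 : ∑ k, p k = 1)
    (x : Fin K → ℝ) : (∑ k, p k * x k) ^ 2 ≤ ∑ k, p k * x k ^ 2 := by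
  have h := Finset.sum_mul_sq_le_sq_mul_sq Finset.univ (fun k => Real.sqrt (p k))
    (fun k => Real.sqrt (p k) * x k)
  have e1 : ∀ k : Fin K, Real.sqrt (p k) * (Real.sqrt (p k) * x k) = p k * x k := by
    intro k; rw [← mul_assoc, Real.mul_self_sqrt (hp k)]
  have e3 : ∀ k : Fin K, (Real.sqrt (p k) * x k) ^ 2 = p k * x k ^ 2 := by
    intro k; rw [mul_pow, Real.sq_sqrt (hp k)]
  calc (∑ k, p k * x k) ^ 2 ≤ (∑ k, p k) * ∑ k, p k * x k ^ 2 := by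
        simpa [e1, e3, Real.sq_sqrt (hp _)] using h
    _ = ∑ k, p k * x k ^ 2 := by rw [hp1, one_mul]

/-- Separable-state computation (equation (29)): the local uncertainty sum for a
separable state is at least 4(N−1). -/
theorem stmt14 (N : ℕ) (hN : 0 < N) (K : ℕ) (p : Fin K → ℝ)
    (hp : ∀ k, 0 ≤ p k) (hp1 : ∑ k, p k = 1)
    (r s : Fin K → (Fin (N ^ 2 - 1) → ℝ))
    (hr : ∀ k, r k ⬝ᵥ r k ≤ 2 * (N - 1) / N) (hs : ∀ k, s k ⬝ᵥ s k ≤ 2 * (N - 1) / N)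
    (a b : Fin (N ^ 2 - 1) → (Fin (N ^ 2 - 1) → ℝ))
    (ha : ∀ i j, a i ⬝ᵥ a j = if i = j then 1 else 0)
    (hb : ∀ i j, b i ⬝ᵥ b j = if i = j then 1 else 0) :
    4 * (N ^ 2 - 1) / N + 2 * ∑ i, ∑ k, p k * (r k ⬝ᵥ a i) * (s k ⬝ᵥ b i)
      - ∑ i, (∑ k, p k * ((r k ⬝ᵥ a i) + (s k ⬝ᵥ b i))) ^ 2 ≥ 4 * (N - 1) := by
  have hNR : (0:ℝ) < N := by exact_mod_cast hN
  -- Step 1: Jensen per i, then sum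
  have step1 : ∑ i, (∑ k, p k * ((r k ⬝ᵥ a i) + (s k ⬝ᵥ b i))) ^ 2
      ≤ ∑ i, ∑ k, p k * ((r k ⬝ᵥ a i) + (s k ⬝ᵥ b i)) ^ 2 :=
    Finset.sum_le_sum fun i _ => jensen_sq p hp hp1 _
  -- Step 2: expand the square and use Bessel equality
  have step2 : ∑ i, ∑ k, p k * ((r k ⬝ᵥ a i) + (s k ⬝ᵥ b i)) ^ 2
      = ∑ k, p k * (r k ⬝ᵥ r k + s k ⬝ᵥ s k)
        + 2 * ∑ i, ∑ k, p k * (r k ⬝ᵥ a i) * (s k ⬝ᵥ b i) := by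
    rw [Finset.sum_comm]
    rw [show (2:ℝ) * ∑ i, ∑ k, p k * (r k ⬝ᵥ a i) * (s k ⬝ᵥ b i)
        = ∑ k, 2 * ∑ i, p k * (r k ⬝ᵥ a i) * (s k ⬝ᵥ b i) by
      rw [Finset.sum_comm, Finset.mul_sum]]
    rw [← Finset.sum_add_distrib]
    refine Finset.sum_congr rfl fun k _ => ?_
    have expand : ∑ i, p k * ((r k ⬝ᵥ a i) + (s k ⬝ᵥ b i)) ^ 2
        = p k * (∑ i, (r k ⬝ᵥ a i) ^ 2) + p k * (∑ i, (s k ⬝ᵥ b i) ^ 2)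
          + 2 * ∑ i, p k * (r k ⬝ᵥ a i) * (s k ⬝ᵥ b i) := by
      simp only [Finset.mul_sum, ← Finset.sum_add_distrib]
      exact Finset.sum_congr rfl fun i _ => by ring
    rw [expand, bessel_eq a ha (r k), bessel_eq b hb (s k)]
    ring
  -- Step 3: bound the norms
  have step3 : ∑ k, p k * (r k ⬝ᵥ r k + s k ⬝ᵥ s k) ≤ 4 * ((N:ℝ) - 1) / N := by
    calc ∑ k, p k * (r k ⬝ᵥ r k + s k ⬝ᵥ s k)
        ≤ ∑ k, p k * (4 * ((N:ℝ) - 1) / N) := by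
          refine Finset.sum_le_sum fun k _ => mul_le_mul_of_nonneg_left ?_ (hp k)
          have h4 : 4 * ((N:ℝ) - 1) / N = 2 * ((N:ℝ)-1)/N + 2 * ((N:ℝ)-1)/N := by ring
          rw [h4]; exact add_le_add (hr k) (hs k)
      _ = 4 * ((N:ℝ) - 1) / N := by rw [← Finset.sum_mul, hp1, one_mul]
  have harith : 4 * ((N:ℝ) ^ 2 - 1) / N - 4 * ((N:ℝ) - 1) / N = 4 * ((N:ℝ) - 1) := by
    field_simp
    ring
  linarith [step1, step2.le, step3]
end

section
/- For an N×N bipartite density matrix ρ_AB with Bloch decomposition involving correlation matrix 𝒯 and marginal Bloch vectors r, s, and any complete orthonormal set of local observables M_i = A_i⊗I + I⊗B_i with A_i = a_i·λ, B_i = b_i·λ traceless Hermitian satisfying Tr[A_iA_j] = Tr[B_iB_j] = 2δ_{ij}, one has Σ_{i=1}^{N²−1} ΔM_i² = 4(N²−1)/N + 2Σᵢ a_iᵀ𝒯b_i − Σᵢ (r·a_i + s·b_i)². -/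
open Matrix Kronecker ComplexOrder


lemma stmt18_complete (N : ℕ) (hN : 0 < N)
    (lam : Fin (N ^ 2 - 1) → Matrix (Fin N) (Fin N) ℂ)
    (htrless : ∀ μ, trace (lam μ) = 0)
    (horth : ∀ μ ν, trace (lam μ * lam ν) = if μ = ν then 2 else 0) :
    ∀ m l q p : Fin N, ∑ μ, lam μ m l * lam μ q p
      = (if l = q ∧ m = p then 2 else 0)
        - (2 / (N : ℂ)) * ((if m = l then 1 else 0) * (if q = p then 1 else 0)) := by
  have hN' : (N : ℂ) ≠ 0 := Nat.cast_ne_zero.mpr hN.ne'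
  set c : ℂ := ((Real.sqrt (2 / N) : ℝ) : ℂ) with hc
  have hc2 : c * c = 2 / (N : ℂ) := by
    rw [hc, ← Complex.ofReal_mul, Real.mul_self_sqrt (by positivity)]
    push_cast
    ring
  set f : Fin (N ^ 2 - 1) ⊕ Unit → Matrix (Fin N) (Fin N) ℂ :=
    Sum.elim lam (fun _ => c • 1) with hf
  have horth' : ∀ α β, trace (f α * f β) = if α = β then 2 else 0 := by
    rintro (μ | _) (ν | _)
    · simp only [hf, Sum.elim_inl, horth]
      simp
    · simp [hf, mul_smul_comm, trace_smul, htrless]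
    · simp [hf, smul_mul_assoc, trace_smul, htrless]
    · simp only [hf, Sum.elim_inr]
      rw [smul_mul_smul_comm, one_mul, trace_smul, trace_one, smul_eq_mul, hc2]
      simp [Finset.card_univ, div_mul_cancel₀ _ hN']
  have htrace_lin : ∀ (g : Fin (N ^ 2 - 1) ⊕ Unit → ℂ) (β),
      trace ((∑ α, g α • f α) * f β) = 2 * g β := by
    intro g β
    rw [Finset.sum_mul, trace_sum]
    simp only [smul_mul_assoc, trace_smul, horth', smul_eq_mul, mul_ite, mul_zero]
    rw [Finset.sum_ite_eq' _ β]
    simp [mul_comm]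
  have hli : LinearIndependent ℂ f := by
    rw [Fintype.linearIndependent_iff]
    intro g hg β
    have h2 := htrace_lin g β
    rw [hg] at h2
    simpa using h2.symm
  have hcard : Fintype.card (Fin (N ^ 2 - 1) ⊕ Unit)
      = Module.finrank ℂ (Matrix (Fin N) (Fin N) ℂ) := by
    rw [Module.finrank_matrix]
    simp only [Fintype.card_sum, Fintype.card_fin, Fintype.card_unit, Module.finrank_self, mul_one]
    rw [← pow_two, Nat.sub_add_cancel (Nat.one_le_pow _ _ hN)]
  set B := basisOfLinearIndependentOfCardEqFinrank hli hcard with hB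
  have hBf : ⇑B = f := coe_basisOfLinearIndependentOfCardEqFinrank hli hcard
  have hexp : ∀ X : Matrix (Fin N) (Fin N) ℂ,
      X = ∑ α, (trace (X * f α) / 2) • f α := by
    intro X
    conv_lhs => rw [← B.sum_repr X]
    rw [hBf]
    congr 1
    funext α
    congr 1
    have := htrace_lin (fun α => B.repr X α) α
    conv at this => rw [show (∑ α', B.repr X α' • f α') = X by rw [← hBf, B.sum_repr]]
    rw [this]
    ring
  intro m l q p
  have hE := congrArg (fun X => X q p) (hexp (Matrix.single l m 1))
  simp only [Finset.sum_apply, Matrix.sum_apply, Matrix.smul_apply, smul_eq_mul] at hE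
  have htrE : ∀ α, trace (Matrix.single l m (1:ℂ) * f α) = f α m l := by
    intro α
    rw [trace]
    simp [Matrix.mul_apply, Matrix.single, diag, ite_and, Finset.sum_ite_eq, Finset.sum_ite_eq']
  simp only [htrE] at hE
  rw [Fintype.sum_sum_type] at hE
  simp only [hf, Sum.elim_inl, Sum.elim_inr, Finset.univ_unique, Finset.sum_singleton,
    Matrix.smul_apply, Matrix.one_apply, smul_eq_mul, Matrix.single, of_apply] at hE
  have hsum : ∑ μ, lam μ m l / 2 * lam μ q p = (∑ μ, lam μ m l * lam μ q p) / 2 := by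
    rw [Finset.sum_div]; exact Finset.sum_congr rfl fun μ _ => by ring
  rw [hsum] at hE
  rw [show (if l = q ∧ m = p then (2:ℂ) else 0)
      = 2 * (if l = q ∧ m = p then 1 else 0) by split <;> ring]
  linear_combination (-2 : ℂ) * hE
    - ((if m = l then (1:ℂ) else 0) * (if q = p then 1 else 0)) * hc2


lemma stmt18_casimir (N : ℕ) (hN : 0 < N)
    (lam : Fin (N ^ 2 - 1) → Matrix (Fin N) (Fin N) ℂ)
    (hcomp : ∀ m l q p : Fin N, ∑ μ, lam μ m l * lam μ q p
      = (if l = q ∧ m = p then 2 else 0)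
        - (2 / (N : ℂ)) * ((if m = l then 1 else 0) * (if q = p then 1 else 0))) :
    ∑ μ, lam μ * lam μ = ((2 * N - 2 / N : ℂ)) • 1 := by
  ext m p
  simp only [Matrix.sum_apply, Matrix.mul_apply, Matrix.smul_apply, Matrix.one_apply,
    smul_eq_mul]
  rw [Finset.sum_comm]
  have h1 : ∀ l : Fin N, (∑ μ, lam μ m l * lam μ l p)
      = (if m = p then 2 else 0)
        - (2/(N:ℂ)) * ((if m = l then 1 else 0) * (if l = p then 1 else 0)) := by
    intro l; rw [hcomp m l l p]; simp
  rw [Finset.sum_congr rfl fun l _ => h1 l, Finset.sum_sub_distrib]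
  rw [Finset.sum_const, ← Finset.mul_sum]
  have h2 : ∑ l : Fin N, ((if m = l then (1:ℂ) else 0) * (if l = p then 1 else 0))
      = if m = p then 1 else 0 := by
    simp [ite_and, eq_comm, Finset.sum_ite_eq]
  rw [h2]
  simp only [Finset.card_univ, Fintype.card_fin, nsmul_eq_mul]
  split <;> ring


/-- Variance computation for local observables Mᵢ = Aᵢ⊗1 + 1⊗Bᵢ on a bipartite state
(equation (28)): Σᵢ ΔMᵢ² = 4(N²−1)/N + 2Σᵢ aᵢᵀ𝒯bᵢ − Σᵢ(r·aᵢ + s·bᵢ)². -/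
theorem stmt18 (N : ℕ) (hN : 0 < N)
    (lam : Fin (N ^ 2 - 1) → Matrix (Fin N) (Fin N) ℂ)
    (hherm : ∀ μ, (lam μ).IsHermitian) (htrless : ∀ μ, trace (lam μ) = 0)
    (horth : ∀ μ ν, trace (lam μ * lam ν) = if μ = ν then 2 else 0)
    (r s : Fin (N ^ 2 - 1) → ℝ) (T : Matrix (Fin (N ^ 2 - 1)) (Fin (N ^ 2 - 1)) ℝ)
    (ρ : Matrix (Fin N × Fin N) (Fin N × Fin N) ℂ)
    (hρ : ρ = ((N : ℂ) ^ 2)⁻¹ • ((1 : Matrix (Fin N) (Fin N) ℂ) ⊗ₖ 1)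
        + ((2 * N : ℂ))⁻¹ • ((∑ μ, (r μ : ℂ) • lam μ) ⊗ₖ 1)
        + ((2 * N : ℂ))⁻¹ • ((1 : Matrix (Fin N) (Fin N) ℂ) ⊗ₖ (∑ ν, (s ν : ℂ) • lam ν))
        + (4 : ℂ)⁻¹ • ∑ μ, ∑ ν, (T μ ν : ℂ) • (lam μ ⊗ₖ lam ν))
    (hρPSD : ρ.PosSemidef)
    (a b : Fin (N ^ 2 - 1) → (Fin (N ^ 2 - 1) → ℝ))
    (ha : ∀ i j, a i ⬝ᵥ a j = if i = j then 1 else 0)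
    (hb : ∀ i j, b i ⬝ᵥ b j = if i = j then 1 else 0)
    (M : Fin (N ^ 2 - 1) → Matrix (Fin N × Fin N) (Fin N × Fin N) ℂ)
    (hM : ∀ i, M i = (∑ μ, ((a i μ : ℝ) : ℂ) • lam μ) ⊗ₖ 1
        + (1 : Matrix (Fin N) (Fin N) ℂ) ⊗ₖ (∑ μ, ((b i μ : ℝ) : ℂ) • lam μ)) :
    ∑ i, ((trace (M i ^ 2 * ρ)).re - ((trace (M i * ρ)).re) ^ 2)
      = 4 * (N ^ 2 - 1) / N + 2 * ∑ i, a i ⬝ᵥ T.mulVec (b i)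
        - ∑ i, (r ⬝ᵥ a i + s ⬝ᵥ b i) ^ 2 := by
  have hN' : (N : ℂ) ≠ 0 := Nat.cast_ne_zero.mpr hN.ne'
  -- scalar trace lemmas
  have htr0 : ∀ c : Fin (N ^ 2 - 1) → ℝ, trace (∑ μ, (c μ : ℂ) • lam μ) = 0 := by
    intro c; simp [trace_sum, trace_smul, htrless]
  have hpair : ∀ c d : Fin (N ^ 2 - 1) → ℝ,
      trace ((∑ μ, (c μ : ℂ) • lam μ) * (∑ ν, (d ν : ℂ) • lam ν))
        = 2 * ((c ⬝ᵥ d : ℝ) : ℂ) := by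
    intro c d
    rw [Finset.sum_mul]
    simp only [Finset.mul_sum, smul_mul_assoc, mul_smul_comm, trace_sum, trace_smul, horth,
      smul_eq_mul, mul_ite, mul_zero, mul_one, Finset.sum_ite_eq, Finset.mem_univ, if_true]
    simp only [dotProduct]
    push_cast
    rw [Finset.mul_sum]
    exact Finset.sum_congr rfl fun μ _ => by ring
  have hsingle : ∀ (c : Fin (N ^ 2 - 1) → ℝ) (ν),
      trace ((∑ μ, (c μ : ℂ) • lam μ) * lam ν) = 2 * (c ν : ℂ) := by
    intro c ν
    rw [Finset.sum_mul]
    simp only [smul_mul_assoc, trace_sum, trace_smul, horth, smul_eq_mul, mul_ite, mul_zero,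
      Finset.sum_ite_eq', Finset.mem_univ, if_true]
    ring
  have hk : ∀ P Q P' Q' : Matrix (Fin N) (Fin N) ℂ,
      trace ((P ⊗ₖ Q) * (P' ⊗ₖ Q')) = trace (P * P') * trace (Q * Q') := by
    intro P Q P' Q'
    rw [← Matrix.mul_kronecker_mul, Matrix.trace_kronecker]
  have hXY : ∀ X Y : Matrix (Fin N) (Fin N) ℂ, trace ((X ⊗ₖ Y) * ρ) =
      ((N : ℂ) ^ 2)⁻¹ * (trace X * trace Y)
      + ((2 * N : ℂ))⁻¹ * (trace (X * ∑ μ, (r μ : ℂ) • lam μ) * trace Y)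
      + ((2 * N : ℂ))⁻¹ * (trace X * trace (Y * ∑ ν, (s ν : ℂ) • lam ν))
      + (4 : ℂ)⁻¹ * ∑ μ, ∑ ν, (T μ ν : ℂ) * (trace (X * lam μ) * trace (Y * lam ν)) := by
    intro X Y
    rw [hρ]
    simp only [mul_add, Finset.mul_sum, mul_smul_comm, trace_add, trace_smul, trace_sum, hk,
      smul_eq_mul, mul_one]
  have haa : ∀ i, a i ⬝ᵥ a i = (1 : ℝ) := fun i => by simp [ha]
  have hbb : ∀ i, b i ⬝ᵥ b i = (1 : ℝ) := fun i => by simp [hb]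
  have htrone : trace (1 : Matrix (Fin N) (Fin N) ℂ) = (N : ℂ) := by
    simp [Matrix.trace_one]
  -- value of Tr[M_i ρ]
  have ht1 : ∀ i, trace (M i * ρ) = ((r ⬝ᵥ a i + s ⬝ᵥ b i : ℝ) : ℂ) := by
    intro i
    rw [hM, add_mul, trace_add]
    simp only [hXY]
    rw [dotProduct_comm r (a i), dotProduct_comm s (b i)]
    simp only [htr0, htrone, hpair, hsingle, one_mul, mul_one, mul_zero, zero_mul, htrless,
      add_zero, zero_add, Finset.sum_const_zero]
    push_cast
    field_simp
  -- M i squared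
  have hMsq : ∀ i, M i ^ 2
      = ((∑ μ, ((a i μ : ℝ) : ℂ) • lam μ) * (∑ μ, ((a i μ : ℝ) : ℂ) • lam μ)) ⊗ₖ 1
        + (∑ μ, ((a i μ : ℝ) : ℂ) • lam μ) ⊗ₖ (∑ μ, ((b i μ : ℝ) : ℂ) • lam μ)
        + (∑ μ, ((a i μ : ℝ) : ℂ) • lam μ) ⊗ₖ (∑ μ, ((b i μ : ℝ) : ℂ) • lam μ)
        + (1 : Matrix (Fin N) (Fin N) ℂ)
            ⊗ₖ ((∑ μ, ((b i μ : ℝ) : ℂ) • lam μ) * (∑ μ, ((b i μ : ℝ) : ℂ) • lam μ)) := by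
    intro i
    rw [hM, sq]
    simp only [add_mul, mul_add, ← Matrix.mul_kronecker_mul, one_mul, mul_one]
    abel
  have hT : ∀ i, ∑ μ, ∑ ν, ((T μ ν : ℝ) : ℂ) * (2 * ((a i μ : ℝ) : ℂ) * (2 * ((b i ν : ℝ) : ℂ)))
      = 4 * ((a i ⬝ᵥ T.mulVec (b i) : ℝ) : ℂ) := by
    intro i
    have : (a i ⬝ᵥ T.mulVec (b i) : ℝ) = ∑ μ, ∑ ν, a i μ * (T μ ν * b i ν) := by
      simp [dotProduct, Matrix.mulVec, Finset.mul_sum]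
    rw [this]
    push_cast
    rw [Finset.mul_sum]
    refine Finset.sum_congr rfl fun μ _ => ?_
    rw [Finset.mul_sum]
    exact Finset.sum_congr rfl fun ν _ => by ring
  have ht2 : ∀ i, trace (M i ^ 2 * ρ)
      = ((4 / N + 2 * (a i ⬝ᵥ T.mulVec (b i)) : ℝ) : ℂ)
        + (2 : ℂ)⁻¹ * trace (((∑ μ, ((a i μ : ℝ) : ℂ) • lam μ)
              * (∑ μ, ((a i μ : ℝ) : ℂ) • lam μ)) * (∑ μ, (r μ : ℂ) • lam μ))
        + (2 : ℂ)⁻¹ * trace (((∑ μ, ((b i μ : ℝ) : ℂ) • lam μ)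
              * (∑ μ, ((b i μ : ℝ) : ℂ) • lam μ)) * (∑ ν, (s ν : ℂ) • lam ν)) := by
    intro i
    rw [hMsq, add_mul, add_mul, add_mul, trace_add, trace_add, trace_add]
    simp only [hXY]
    simp only [htr0, htrone, hpair, hsingle, one_mul, mul_one, mul_zero, zero_mul, htrless,
      add_zero, zero_add, Finset.sum_const_zero, haa, hbb]
    rw [hT i]
    push_cast
    field_simp
    ring
  -- column orthonormality
  have hcol : ∀ c : Fin (N ^ 2 - 1) → (Fin (N ^ 2 - 1) → ℝ),
      (∀ i j, c i ⬝ᵥ c j = if i = j then 1 else 0) →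
      ∀ μ ν, (∑ i, c i μ * c i ν : ℝ) = if μ = ν then 1 else 0 := by
    intro c hc μ ν
    have hPPt : (Matrix.of c) * (Matrix.of c)ᵀ = 1 := by
      ext i j
      simpa [Matrix.mul_apply, dotProduct, Matrix.one_apply] using hc i j
    have hPtP := mul_eq_one_comm.mp hPPt
    have h := congrFun (congrFun hPtP μ) ν
    simpa [Matrix.mul_apply, Matrix.one_apply] using h
  have hcomp := stmt18_complete N hN lam htrless horth
  have hcas := stmt18_casimir N hN lam hcomp
  have hsumAA : ∀ c : Fin (N ^ 2 - 1) → (Fin (N ^ 2 - 1) → ℝ),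
      (∀ i j, c i ⬝ᵥ c j = if i = j then 1 else 0) →
      ∑ i, (∑ μ, ((c i μ : ℝ) : ℂ) • lam μ) * (∑ μ, ((c i μ : ℝ) : ℂ) • lam μ)
        = ∑ μ, lam μ * lam μ := by
    intro c hc
    have h1 : ∀ i, (∑ μ, ((c i μ : ℝ) : ℂ) • lam μ) * (∑ μ, ((c i μ : ℝ) : ℂ) • lam μ)
        = ∑ μ, ∑ ν, ((c i μ * c i ν : ℝ) : ℂ) • (lam μ * lam ν) := by
      intro i
      rw [Finset.sum_mul]
      refine Finset.sum_congr rfl fun μ _ => ?_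
      rw [Finset.mul_sum]
      refine Finset.sum_congr rfl fun ν _ => ?_
      rw [smul_mul_assoc, mul_smul_comm, smul_smul]
      norm_cast
    simp only [h1]
    rw [Finset.sum_comm]
    refine Finset.sum_congr rfl fun μ _ => ?_
    rw [Finset.sum_comm]
    have h2 : ∀ ν, ∑ i, ((c i μ * c i ν : ℝ) : ℂ) • (lam μ * lam ν)
        = (((if μ = ν then 1 else 0 : ℝ)) : ℂ) • (lam μ * lam ν) := by
      intro ν
      rw [← Finset.sum_smul, ← hcol c hc μ ν]
      norm_cast
    simp only [h2]
    simp [apply_ite (fun x : ℝ => (x : ℂ)), ite_smul, Finset.sum_ite_eq]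
  have hAR0 : ∑ i, trace (((∑ μ, ((a i μ : ℝ) : ℂ) • lam μ)
        * (∑ μ, ((a i μ : ℝ) : ℂ) • lam μ)) * (∑ μ, (r μ : ℂ) • lam μ)) = 0 := by
    rw [← trace_sum, ← Finset.sum_mul, hsumAA a ha, hcas, smul_mul_assoc, trace_smul, one_mul,
      htr0 r, smul_zero]
  have hBS0 : ∑ i, trace (((∑ μ, ((b i μ : ℝ) : ℂ) • lam μ)
        * (∑ μ, ((b i μ : ℝ) : ℂ) • lam μ)) * (∑ ν, (s ν : ℂ) • lam ν)) = 0 := by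
    rw [← trace_sum, ← Finset.sum_mul, hsumAA b hb, hcas, smul_mul_assoc, trace_smul, one_mul,
      htr0 s, smul_zero]
  have hsum2 : ∑ i, trace (M i ^ 2 * ρ)
      = ((∑ i, (4 / N + 2 * (a i ⬝ᵥ T.mulVec (b i))) : ℝ) : ℂ) := by
    simp only [ht2]
    rw [Finset.sum_add_distrib, Finset.sum_add_distrib, ← Finset.mul_sum, ← Finset.mul_sum,
      hAR0, hBS0, mul_zero, add_zero, add_zero]
    norm_cast
  have hL : ∑ i, ((trace (M i ^ 2 * ρ)).re - ((trace (M i * ρ)).re) ^ 2)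
      = (∑ i, trace (M i ^ 2 * ρ)).re - ∑ i, (r ⬝ᵥ a i + s ⬝ᵥ b i) ^ 2 := by
    rw [Finset.sum_sub_distrib, Complex.re_sum]
    congr 1
    exact Finset.sum_congr rfl fun i _ => by rw [ht1 i, Complex.ofReal_re]
  rw [hL, hsum2, Complex.ofReal_re]
  rw [Finset.sum_add_distrib, Finset.sum_const, Finset.card_univ, Fintype.card_fin,
    ← Finset.mul_sum]
  have hcast : ((N ^ 2 - 1 : ℕ) : ℝ) = (N : ℝ) ^ 2 - 1 := by
    have h1 : 1 ≤ N ^ 2 := Nat.one_le_pow _ _ hN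
    push_cast [h1]
    ring
  have hNR : (N : ℝ) ≠ 0 := Nat.cast_ne_zero.mpr hN.ne'
  rw [nsmul_eq_mul, hcast]
  field_simp
end
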